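/- Assume A ⊆ B ⊆ P(ω₁), B is dichotomous, and |B| < 𝔡_{ω₁}. Then Irr_mm(B) = ℵ₁. -/

import Mathlib

open Cardinal Set

universe u
variable {B : Type u} [BooleanAlgebra B]

/-- Membership in the boolean subalgebra of `B` generated by `E`. -/
inductive InGen (E : Set B) : B → Prop
  | base {a : B} : a ∈ E → InGen E a
  | bot : InGen E ⊥
  | compl {a : B} : InGen E a → InGen E aᶜ
  | sup {a b : B} : InGen E a → InGen E b → InGen E (a ⊔ b)

/-- `E` is irredundant. -/
def Irred (E : Set B) : Prop := ∀ a ∈ E, ¬ InGen (E \ {a}) a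

/-- `E` is independent. -/
def Indep (E : Set B) : Prop :=
  ∀ F G : Finset B, ↑F ⊆ E → ↑G ⊆ E → Disjoint F G →
    F.inf id ⊓ G.inf (fun a => aᶜ) ≠ ⊥

/-- `S` is dense in `B`. -/
def DenseSub (S : Set B) : Prop := ∀ b : B, b ≠ ⊥ → ∃ d ∈ S, d ≠ ⊥ ∧ d ≤ b

/-- pi-weight of `B`: least size of a dense subset. -/
noncomputable def piWeight (B : Type u) [BooleanAlgebra B] : Cardinal :=
  sInf {c | ∃ S : Set B, DenseSub S ∧ #S = c}

/-- `E` is a maximal irredundant subset of `B`. -/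
def MaxIrred (E : Set B) : Prop :=
  Irred E ∧ ∀ b : B, b ∉ E → ¬ Irred (insert b E)

/-- least size of a maximal irredundant subset of `B`. -/
noncomputable def irrMM (B : Type u) [BooleanAlgebra B] : Cardinal :=
  sInf {c | ∃ E : Set B, MaxIrred E ∧ #E = c}


/-- A fixed set of size ℵ₁ with its canonical well-order: "ω₁". -/
noncomputable def W : Type := (Cardinal.aleph 1).ord.ToType

noncomputable instance : LinearOrder W := inferInstanceAs (LinearOrder (Cardinal.aleph 1).ord.ToType)

/-- The finite-cofinite algebra on ω₁. -/
def finCofin : Set (Set W) := {b | b.Finite ∨ bᶜ.Finite}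

/-- `S` is (the underlying set of) a subalgebra of `P(ω₁)`. -/
def IsSubalg (S : Set (Set W)) : Prop :=
  ∅ ∈ S ∧ (∀ a ∈ S, aᶜ ∈ S) ∧ ∀ a ∈ S, ∀ b ∈ S, a ∪ b ∈ S

/-- `E` is a maximal irredundant subset of the subalgebra (with carrier) `Bs`. -/
def MaxIrredIn (Bs E : Set (Set W)) : Prop :=
  E ⊆ Bs ∧ Irred E ∧ ∀ b ∈ Bs, b ∉ E → ¬ Irred (insert b E)

/-- `Irr_mm` of a subalgebra of `P(ω₁)` with carrier `Bs`. -/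
noncomputable def irrMMIn (Bs : Set (Set W)) : Cardinal :=
  sInf {c | ∃ E, MaxIrredIn Bs E ∧ #E = c}

/-- pi-weight of a subalgebra of `P(ω₁)` with carrier `Bs`. -/
noncomputable def piIn (Bs : Set (Set W)) : Cardinal :=
  sInf {c | ∃ S, S ⊆ Bs ∧ (∀ b ∈ Bs, b ≠ ∅ → ∃ d ∈ S, d ≠ ∅ ∧ d ⊆ b) ∧ #S = c}

/-- `C` is a closed unbounded subset of ω₁. -/
def IsClubW (C : Set W) : Prop :=
  (∀ α : W, ∃ β ∈ C, α < β) ∧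
    ∀ α : W, (C ∩ Set.Iio α).Nonempty → IsLUB (C ∩ Set.Iio α) α → α ∈ C

/-- `α` and `β` lie in the same `C`-block. -/
def SameBlock (C : Set W) (α β : W) : Prop := ∀ γ ∈ C, (γ ≤ α ↔ γ ≤ β)

/-- `C` is a nice club: all of its blocks are infinite. -/
def NiceClub (C : Set W) : Prop := IsClubW C ∧ ∀ α : W, {β | SameBlock C α β}.Infinite

/-- `b` is a union of `C`-blocks. -/
def BlockUnion (C : Set W) (b : Set W) : Prop :=
  ∀ α β : W, SameBlock C α β → (α ∈ b ↔ β ∈ b)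

/-- `b` is blockish for `C`: both `b` and its complement are unions of ℵ₁ many `C`-blocks. -/
def Blockish (C : Set W) (b : Set W) : Prop :=
  BlockUnion C b ∧ ¬ b.Countable ∧ ¬ bᶜ.Countable

/-- eventual domination: `f α ≤ g α` except on a set of size `< ℵ₁`. -/
def EvDom (f g : W → W) : Prop := {α | ¬ f α ≤ g α}.Countable

/-- the bounding number 𝔟_{ω₁}. -/
noncomputable def bW : Cardinal :=
  sInf {c | ∃ F : Set (W → W), (∀ g, ∃ f ∈ F, ¬ EvDom f g) ∧ #F = c}

/-- the dominating number 𝔡_{ω₁}. -/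
noncomputable def dW : Cardinal :=
  sInf {c | ∃ F : Set (W → W), (∀ g, ∃ f ∈ F, EvDom g f) ∧ #F = c}

/-- `T` splits `X`. -/
def Splits (T X : Set W) : Prop := ¬ (X ∩ T).Countable ∧ ¬ (X \ T).Countable

/-- the reaping number 𝔯_{ω₁}. -/
noncomputable def rW : Cardinal :=
  sInf {c | ∃ R : Set (Set W), (∀ X ∈ R, ¬ X.Countable) ∧
    (∀ T : Set W, ∃ X ∈ R, ¬ Splits T X) ∧ #R = c}

/-- the nice club `C` strongly splits `R`. -/
def StrSplits (C : Set W) (R : Set (Set W)) : Prop :=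
  ∀ b : Set W, Blockish C b → ∀ X ∈ R, Splits b X

/-- the strong reaping number r̂_{ω₁}. -/
noncomputable def rHatW : Cardinal :=
  sInf {c | ∃ R : Set (Set W), (∀ X ∈ R, ¬ X.Countable) ∧
    (∀ C : Set W, NiceClub C → ¬ StrSplits C R) ∧ #R = c}

/-- a subalgebra of `P(ω₁)` is dichotomous iff none of its members is countably infinite. -/
def Dichot (Bs : Set (Set W)) : Prop := ∀ b ∈ Bs, ¬ (b.Countable ∧ b.Infinite)

/-!
Lower bound: a countable set generates only countably many sets, so some singleton `{x}` is not
generated by a countable irredundant `E`; adjoining the atom `{x}` keeps `E` irredundant, hence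
maximal irredundant sets are uncountable.

Upper bound: since `|B| < 𝔡_{ω₁}`, `ω₁` can be cut into countably infinite blocks, intervals
between closure points of a fast-growing function, such that every `b ∈ B` which is neither finite
nor cofinite (so, by dichotomy, uncountable and co-uncountable) splits some block. Enumerate each
block as `e₀, e₁, …` and take all initial segments `{e₀, …, eₙ}`. Only the `n`-th segment separates
`eₙ` from `eₙ₊₁`, so these are irredundant; they generate all finite sets; and a `b` splitting a
block contains exactly one of some `eₖ, eₖ₊₁`, so `b` and the other segments generate the `k`-th.
-/

open scoped symmDiff

namespace InGen

variable {G G' : Set B} {x y z : B}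

theorem mono (hG : G ⊆ G') (hz : InGen G z) : InGen G' z := by
  induction hz with
  | base ha => exact base (hG ha)
  | bot => exact bot
  | compl _ ih => exact compl ih
  | sup _ _ ih₁ ih₂ => exact sup ih₁ ih₂

theorem inf (hx : InGen G x) (hy : InGen G y) : InGen G (x ⊓ y) := by
  simpa using (hx.compl.sup hy.compl).compl

theorem sdiff (hx : InGen G x) (hy : InGen G y) : InGen G (x \ y) := by
  simpa [_root_.sdiff_eq] using hx.inf hy.compl

theorem symmDiff (hx : InGen G x) (hy : InGen G y) : InGen G (x ∆ y) :=
  (hx.sdiff hy).sup (hy.sdiff hx)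

theorem exists_sdiff_eq_of_insert {b : B} (hz : InGen (insert b G) z) :
    ∃ y, InGen G y ∧ z \ b = y \ b := by
  induction hz with
  | base ha =>
    rcases ha with rfl | ha
    · exact ⟨⊥, bot, by simp⟩
    · exact ⟨_, base ha, rfl⟩
  | bot => exact ⟨⊥, bot, rfl⟩
  | @compl z _ ih =>
    obtain ⟨y, hy, hzy⟩ := ih
    refine ⟨yᶜ, hy.compl, ?_⟩
    rw [_root_.sdiff_eq, ← compl_sup, ← sdiff_sup_self, hzy, sdiff_sup_self, compl_sup,
      _root_.sdiff_eq]
  | sup _ _ ih₁ ih₂ =>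
    obtain ⟨y₁, hy₁, h₁⟩ := ih₁
    obtain ⟨y₂, hy₂, h₂⟩ := ih₂
    exact ⟨y₁ ⊔ y₂, hy₁.sup hy₂, by rw [sup_sdiff, sup_sdiff, h₁, h₂]⟩

end InGen

def genStep (S : Set B) : Set B := insert ⊥ (S ∪ compl '' S ∪ image2 (· ⊔ ·) S S)

theorem subset_genStep (S : Set B) : S ⊆ genStep S :=
  fun _ hx => mem_insert_of_mem _ (Or.inl (Or.inl hx))

theorem Set.Countable.genStep {S : Set B} (hS : S.Countable) : (genStep S).Countable :=
  ((hS.union (hS.image _)).union (hS.image2 hS _)).insert _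

theorem InGen.exists_mem_iterate_genStep {G : Set B} {z : B} (hz : InGen G z) :
    ∃ n, z ∈ genStep^[n] G := by
  have hmono : Monotone fun n => genStep^[n] G := monotone_nat_of_le_succ fun n => by
    simpa only [Function.iterate_succ_apply'] using subset_genStep _
  induction hz with
  | base ha => exact ⟨0, ha⟩
  | bot => exact ⟨1, mem_insert _ _⟩
  | compl _ ih =>
    obtain ⟨n, hn⟩ := ih
    refine ⟨n + 1, ?_⟩
    rw [Function.iterate_succ_apply']
    exact mem_insert_of_mem _ (Or.inl (Or.inr (mem_image_of_mem _ hn)))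
  | sup _ _ ih₁ ih₂ =>
    obtain ⟨n₁, hn₁⟩ := ih₁
    obtain ⟨n₂, hn₂⟩ := ih₂
    refine ⟨max n₁ n₂ + 1, ?_⟩
    rw [Function.iterate_succ_apply']
    exact mem_insert_of_mem _ (Or.inr (mem_image2_of_mem
      (hmono (le_max_left n₁ n₂) hn₁) (hmono (le_max_right n₁ n₂) hn₂)))

theorem countable_setOf_inGen {G : Set B} (hG : G.Countable) : {z | InGen G z}.Countable := by
  have hiter : ∀ n, (genStep^[n] G).Countable := fun n => by
    induction n with
    | zero => exact hG
    | succ n ih => simpa only [Function.iterate_succ_apply'] using ih.genStep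
  exact (countable_iUnion hiter).mono fun z hz => mem_iUnion.2 hz.exists_mem_iterate_genStep

theorem not_irred_insert_of_inGen {E : Set B} {b : B} (hbE : b ∉ E) (hb : InGen E b) :
    ¬ Irred (insert b E) :=
  fun hirr => hirr b (mem_insert b E) (by rwa [insert_sdiff_self_of_notMem hbE])

theorem Irred.insert_of_isAtom {E : Set B} {p : B} (hE : Irred E) (hp : IsAtom p)
    (hpE : ¬ InGen E p) : Irred (insert p E) := by
  have hpE' : p ∉ E := fun h => hpE (.base h)
  rintro a (rfl | ha) hgen
  · exact hpE (by rwa [insert_sdiff_self_of_notMem hpE'] at hgen)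
  have hpa : p ≠ a := fun h => hpE' (h ▸ ha)
  rw [← insert_sdiff_singleton_comm hpa] at hgen
  -- `a` agrees off the atom `p` with some `y` generated by `E \ {a}`, so `a ∆ y` is `⊥` or `p`.
  obtain ⟨y, hy, hay⟩ := hgen.exists_sdiff_eq_of_insert
  have hle : a ∆ y ≤ p := by
    rw [← sdiff_eq_bot_iff, _root_.sdiff_eq, inf_symmDiff_distrib_right, ← _root_.sdiff_eq,
      ← _root_.sdiff_eq, hay, symmDiff_self]
  rcases hp.le_iff.1 hle with h | h
  · exact hE a ha (symmDiff_eq_bot.1 h ▸ hy)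
  · exact hpE (h ▸ (InGen.base ha).symmDiff (hy.mono sdiff_subset))

theorem InGen.mem_iff_mem_of_forall {X : Type*} {G : Set (Set X)} {a b : X}
    (hG : ∀ s ∈ G, (a ∈ s ↔ b ∈ s)) {z : Set X} (hz : InGen G z) : a ∈ z ↔ b ∈ z := by
  induction hz with
  | base hs => exact hG _ hs
  | bot => exact Iff.rfl
  | compl _ ih => exact ih.not
  | sup _ _ ih₁ ih₂ => exact ih₁.or ih₂

theorem exists_singleton_not_inGen {X : Type*} [Uncountable X] {E : Set (Set X)}
    (hE : E.Countable) : ∃ x, ¬ InGen E {x} := by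
  by_contra! h
  exact not_countable_univ ((countable_setOf_inGen hE).preimage singleton_injective |>.mono
    fun x _ => h x)

theorem exists_equiv_range_prod_nat {X Q : Type*} (π : X → Q)
    (hπ : ∀ x, {y | π y = π x}.Countable ∧ {y | π y = π x}.Infinite) :
    ∃ e : X ≃ range π × ℕ, ∀ x, ((e x).1 : Q) = π x := by
  have hfiber : ∀ q : range π, Nonempty ({x // rangeFactorization π x = q} ≃ ℕ) := by
    rintro ⟨_, x, rfl⟩
    have hfx : {y | rangeFactorization π y = ⟨π x, x, rfl⟩} = {y | π y = π x} := by
      ext y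
      simp [rangeFactorization, Subtype.ext_iff]
    have : Countable {y // rangeFactorization π y = ⟨π x, x, rfl⟩} := (hfx ▸ (hπ x).1).to_subtype
    have : Infinite {y // rangeFactorization π y = ⟨π x, x, rfl⟩} := (hfx ▸ (hπ x).2).to_subtype
    exact nonempty_equiv_of_countable
  exact ⟨(Equiv.sigmaFiberEquiv _).symm.trans
    (Equiv.sigmaEquivProdOfEquiv fun q => (hfiber q).some), fun x => rfl⟩

section FiberSegments

variable {X Q : Type*} (e : X ≃ Q × ℕ)

def fiberSegment (q : Q) (n : ℕ) : Set X := e ⁻¹' ({q} ×ˢ Iic n)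

def fiberSegments : Set (Set X) := range fun p : Q × ℕ => fiberSegment e p.1 p.2

variable {e}

@[simp]
theorem symm_mem_fiberSegment {q q' : Q} {m n : ℕ} :
    e.symm (q', m) ∈ fiberSegment e q n ↔ q' = q ∧ m ≤ n := by
  simp [fiberSegment]

theorem fiberSegment_mem_fiberSegments (q : Q) (n : ℕ) : fiberSegment e q n ∈ fiberSegments e :=
  ⟨(q, n), rfl⟩

variable (e)

theorem fiberSegment_finite (q : Q) (n : ℕ) : (fiberSegment e q n).Finite :=
  ((finite_singleton q).prod (finite_Iic n)).preimage e.injective.injOn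

theorem fiberSegment_injective (q : Q) : Function.Injective (fiberSegment e q) := by
  intro m n h
  have hm : e.symm (q, m) ∈ fiberSegment e q n := h ▸ symm_mem_fiberSegment.2 ⟨rfl, le_rfl⟩
  have hn : e.symm (q, n) ∈ fiberSegment e q m := h ▸ symm_mem_fiberSegment.2 ⟨rfl, le_rfl⟩
  exact le_antisymm (symm_mem_fiberSegment.1 hm).2 (symm_mem_fiberSegment.1 hn).2

/-- Only `fiberSegment e q n` separates `e.symm (q, n)` from `e.symm (q, n + 1)`. -/
theorem irred_fiberSegments : Irred (fiberSegments e) := by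
  rintro _ ⟨⟨q, n⟩, rfl⟩ hgen
  have hsep : ∀ s ∈ fiberSegments e \ {fiberSegment e q n},
      (e.symm (q, n) ∈ s ↔ e.symm (q, n + 1) ∈ s) := by
    rintro _ ⟨⟨⟨q', m⟩, rfl⟩, hne⟩
    have : ¬ (q = q' ∧ m = n) := by
      rintro ⟨rfl, rfl⟩
      exact hne rfl
    simp only [symm_mem_fiberSegment]
    by_cases hq : q = q' <;> simp only [hq, true_and, false_and] at this ⊢
    omega
  have := hgen.mem_iff_mem_of_forall hsep
  simp at this

theorem singleton_inGen_fiberSegments (x : X) : InGen (fiberSegments e) {x} := by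
  obtain ⟨⟨q, n⟩, rfl⟩ := e.symm.surjective x
  cases n with
  | zero =>
    have : {e.symm (q, 0)} = fiberSegment e q 0 := by
      ext y
      simp [fiberSegment, Equiv.eq_symm_apply, Prod.ext_iff]
    exact this ▸ .base (fiberSegment_mem_fiberSegments q 0)
  | succ n =>
    have : {e.symm (q, n + 1)} = fiberSegment e q (n + 1) \ fiberSegment e q n := by
      ext y
      by_cases hq : (e y).1 = q <;> simp [fiberSegment, Equiv.eq_symm_apply, Prod.ext_iff, hq]
      omega
    exact this ▸ (InGen.base (fiberSegment_mem_fiberSegments q (n + 1))).sdiff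
      (.base (fiberSegment_mem_fiberSegments q n))

theorem inGen_fiberSegments_of_finite {s : Set X} (hs : s.Finite) : InGen (fiberSegments e) s := by
  induction s, hs using Set.Finite.induction_on with
  | empty => exact .bot
  | insert _ _ ih => exact (singleton_inGen_fiberSegments e _).sup ih

theorem inGen_fiberSegments_of_finite_or_cofinite {s : Set X} (hs : s.Finite ∨ sᶜ.Finite) :
    InGen (fiberSegments e) s := by
  rcases hs with hs | hs
  · exact inGen_fiberSegments_of_finite e hs
  · simpa using (inGen_fiberSegments_of_finite e hs).compl

theorem fiberSegment_inGen_of_flip {b : Set X} {q : Q} {k : ℕ}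
    (hflip : e.symm (q, k) ∈ b ↔ e.symm (q, k + 1) ∉ b) :
    InGen (insert b (fiberSegments e \ {fiberSegment e q k})) (fiberSegment e q k) := by
  set G := insert b (fiberSegments e \ {fiberSegment e q k})
  have hseg : ∀ m ≠ k, InGen G (fiberSegment e q m) := fun m hm =>
    .base (mem_insert_of_mem _ ⟨fiberSegment_mem_fiberSegments q m,
      (fiberSegment_injective e q).ne hm⟩)
  obtain ⟨c, hc, hkc, hk₁c⟩ : ∃ c, InGen G c ∧ e.symm (q, k) ∈ c ∧ e.symm (q, k + 1) ∉ c := by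
    have hb : InGen G b := .base (mem_insert b _)
    by_cases hk : e.symm (q, k) ∈ b
    · exact ⟨b, hb, hk, hflip.1 hk⟩
    · exact ⟨bᶜ, hb.compl, hk, not_not.2 (not_not.1 (hflip.not.1 hk))⟩
  obtain ⟨L, hL, hLmem⟩ : ∃ L, InGen G L ∧ ∀ p : Q × ℕ, e.symm p ∈ L ↔ p.1 = q ∧ p.2 < k := by
    cases k with
    | zero => exact ⟨⊥, .bot, by simp⟩
    | succ j => exact ⟨fiberSegment e q j, hseg j (by omega), by simp⟩
  have heq : fiberSegment e q k = L ∪ (fiberSegment e q (k + 1) ∩ c) := by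
    ext x
    obtain ⟨⟨q', m⟩, rfl⟩ := e.symm.surjective x
    simp only [mem_union, mem_inter_iff, hLmem, symm_mem_fiberSegment]
    by_cases hq : q' = q
    · subst hq
      rcases lt_trichotomy m k with hm | rfl | hm
      · simp [hm, hm.le]
      · simp [hkc]
      · rcases (Nat.succ_le_of_lt hm).eq_or_lt with rfl | hm'
        · simp [hk₁c]
        · simp [hm.not_ge, hm.not_gt, hm'.not_ge]
    · simp [hq]
  exact heq ▸ hL.sup ((hseg (k + 1) (by omega)).inf hc)

theorem not_irred_insert_of_split {b : Set X} (hbE : b ∉ fiberSegments e) {x y : X} (hx : x ∈ b)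
    (hy : y ∉ b) (hxy : (e x).1 = (e y).1) : ¬ Irred (insert b (fiberSegments e)) := by
  set q := (e x).1
  obtain ⟨k, hk⟩ : ∃ k, (e.symm (q, k) ∈ b ↔ e.symm (q, k + 1) ∉ b) := by
    by_contra hconst
    have hstep : ∀ k, (e.symm (q, k) ∈ b ↔ e.symm (q, k + 1) ∈ b) := fun k => by
      by_contra h
      exact hconst ⟨k, by tauto⟩
    have hall : ∀ k, (e.symm (q, k) ∈ b ↔ e.symm (q, 0) ∈ b) := by
      intro k
      induction k with
      | zero => exact Iff.rfl
      | succ k ih => exact (hstep k).symm.trans ih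
    have hx' : e.symm (q, (e x).2) = x := by simp [q]
    have hy' : e.symm (q, (e y).2) = y := by simp [q, hxy]
    exact hy (hy' ▸ (hall _).2 ((hall _).1 (hx'.symm ▸ hx)))
  intro hirr
  have hne : b ≠ fiberSegment e q k := fun h => hbE (h ▸ fiberSegment_mem_fiberSegments q k)
  refine hirr _ (mem_insert_of_mem _ (fiberSegment_mem_fiberSegments q k)) ?_
  rw [← insert_sdiff_singleton_comm hne]
  exact fiberSegment_inGen_of_flip e hk

end FiberSegments

instance : WellFoundedLT W := inferInstanceAs (WellFoundedLT (Cardinal.aleph 1).ord.ToType)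

theorem mk_W : #W = Cardinal.aleph 1 := Cardinal.mk_ord_toType _

instance : Uncountable W := by
  rw [← not_countable_iff, ← Cardinal.mk_le_aleph0_iff, mk_W, not_le]
  exact Cardinal.aleph0_lt_aleph_one

theorem countable_Iio_W (α : W) : (Iio α).Countable := by
  have := mk_Iio_lt (α := W) α (by rw [mk_W]; exact (Ordinal.type_toType _).symm)
  rwa [mk_W, Cardinal.lt_aleph_one_iff, Cardinal.le_aleph0_iff_set_countable] at this

theorem countable_Iic_W (α : W) : (Iic α).Countable := by
  simpa using (countable_Iio_W α).insert α

theorem exists_forall_lt_of_countable {S : Set W} (hS : S.Countable) : ∃ β, ∀ x ∈ S, x < β := by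
  by_contra! h
  have hcof : Order.cof W = Cardinal.aleph 1 := by
    show Order.cof (Cardinal.aleph 1).ord.ToType = _
    rw [Ordinal.cof_toType, Cardinal.isRegular_aleph_one.cof_ord]
  have hS' : #S < Cardinal.aleph 1 := Cardinal.lt_aleph_one_iff.2 hS.le_aleph0
  exact hS'.not_ge (hcof ▸ Order.cof_le h)

theorem exists_gt_mem_of_not_countable {b : Set W} (hb : ¬ b.Countable) (δ : W) :
    ∃ x ∈ b, δ < x := by
  by_contra! h
  exact hb ((countable_Iic_W δ).mono h)

theorem aleph_one_le_mk_of_maxIrredIn {Bs E : Set (Set W)} (hA : finCofin ⊆ Bs)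
    (hE : MaxIrredIn Bs E) : Cardinal.aleph 1 ≤ #E := by
  by_contra! hlt
  obtain ⟨x, hx⟩ := exists_singleton_not_inGen
    (Cardinal.le_aleph0_iff_set_countable.1 (Cardinal.lt_aleph_one_iff.1 hlt))
  exact hE.2.2 {x} (hA (Or.inl (finite_singleton x))) (fun h => hx (.base h))
    (hE.2.1.insert_of_isAtom (isAtom_singleton x) hx)

section Blocks

variable (h : W → W)

def closurePoints : Set W := {γ | ∀ α < γ, h α < γ}

theorem exists_mem_closurePoints_gt (δ : W) : ∃ γ ∈ closurePoints h, δ < γ := by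
  have hstep : ∀ β, ∃ β', β < β' ∧ ∀ x ≤ β, h x < β' := fun β =>
    (exists_forall_lt_of_countable (((countable_Iic_W β).image h).insert β)).imp
      fun _ hβ' => ⟨hβ' β (mem_insert _ _), fun x hx => hβ' _ (mem_insert_of_mem _ ⟨x, hx, rfl⟩)⟩
  choose next hnext_gt hnext using hstep
  set t : ℕ → W := fun n => next^[n] δ
  have ht : ∀ n, t (n + 1) = next (t n) := fun n => Function.iterate_succ_apply' next n δ
  obtain ⟨γ, hγ, hmin⟩ := wellFounded_lt.has_min {β | ∀ n, t n < β}
    (exists_forall_lt_of_countable (countable_range t) |>.imp fun _ hβ n => hβ _ ⟨n, rfl⟩)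
  refine ⟨γ, fun α hαγ => ?_, hγ 0⟩
  obtain ⟨n, hn⟩ : ∃ n, α ≤ t n := by
    by_contra! hα
    exact hmin α (fun n => (ht n ▸ hnext_gt (t n)).trans (hα (n + 1))) hαγ
  exact (hnext _ _ hn).trans (ht n ▸ hγ (n + 1))

/-- Two points lie in the same block iff the same closure points of `h` lie below them. -/
def blockIndex (α : W) : Set W := closurePoints h ∩ Iic α

theorem countable_setOf_blockIndex_eq (α : W) :
    {β | blockIndex h β = blockIndex h α}.Countable := by
  obtain ⟨γ, hγ, hαγ⟩ := exists_mem_closurePoints_gt h α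
  refine (countable_Iio_W γ).mono fun β (hβ : blockIndex h β = blockIndex h α) => ?_
  by_contra hγβ
  have : γ ∈ blockIndex h α := hβ ▸ ⟨hγ, (not_lt.1 hγβ : γ ≤ β)⟩
  exact this.2.not_gt hαγ

theorem blockIndex_eq_of_mem_Ico {α β : W} (hβ : β ∈ Ico α (h α)) :
    blockIndex h β = blockIndex h α := by
  ext γ
  refine ⟨fun ⟨hγ, (hγβ : γ ≤ β)⟩ => ⟨hγ, ?_⟩, fun ⟨hγ, (hγα : γ ≤ α)⟩ => ⟨hγ, hγα.trans hβ.1⟩⟩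
  by_contra hαγ
  exact (hγ α (not_le.1 hαγ)).not_ge (hγβ.trans hβ.2.le)

end Blocks

theorem exists_lt_Ico_infinite (g : W → W) (α : W) : ∃ β, g α < β ∧ (Ico α β).Infinite := by
  have hIci : (Ici α).Infinite := fun hfin => not_countable_univ (by
    simpa using (countable_Iio_W α).union hfin.countable)
  set ι := Set.Infinite.natEmbedding _ hIci
  have hι : (range fun n => (ι n : W)).Infinite :=
    infinite_range_of_injective (Subtype.val_injective.comp ι.injective)
  obtain ⟨β, hβ⟩ := exists_forall_lt_of_countable ((countable_range fun n => (ι n : W)).insert (g α))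
  refine ⟨β, hβ _ (mem_insert _ _), hι.mono ?_⟩
  rintro _ ⟨n, rfl⟩
  exact ⟨(ι n).2, hβ _ (mem_insert_of_mem _ ⟨n, rfl⟩)⟩

theorem exists_forall_not_evDom_of_mk_lt_dW {F : Set (W → W)} (hF : #F < dW) :
    ∃ g, ∀ f ∈ F, ¬ EvDom g f := by
  by_contra! h
  exact hF.not_ge (csInf_le' ⟨F, h, rfl⟩)

theorem exists_lt_of_not_evDom {f g : W → W} (h : ¬ EvDom f g) : ∃ α, g α < f α := by
  by_contra! h'
  exact h (by simp [EvDom, h'])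

/-- The blocks are the intervals between consecutive closure points of a function `h` growing
faster than some `g` which is not dominated by the witness bounds `H b`; at a point `δ` where
`H b δ < g δ`, two witnesses above `δ`, one in `b` and one not, then lie in the block of `δ`. -/
theorem exists_equiv_prod_nat_splitting {S : Set (Set W)} (hS : #S < dW)
    (hbig : ∀ b ∈ S, ¬ b.Countable ∧ ¬ bᶜ.Countable) :
    ∃ (Q : Type) (e : W ≃ Q × ℕ), ∀ b ∈ S, ∃ x ∈ b, ∃ y ∉ b, (e x).1 = (e y).1 := by
  have hwit : ∀ b ∈ S, ∀ δ : W, ∃ β, ∃ x ∈ b, ∃ y ∉ b, δ < x ∧ δ < y ∧ x < β ∧ y < β := by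
    intro b hb δ
    obtain ⟨x, hx, hδx⟩ := exists_gt_mem_of_not_countable (hbig b hb).1 δ
    obtain ⟨y, hy, hδy⟩ := exists_gt_mem_of_not_countable (hbig b hb).2 δ
    obtain ⟨β, hβ⟩ := exists_forall_lt_of_countable ((countable_singleton x).insert y)
    exact ⟨β, x, hx, y, hy, hδx, hδy, hβ x (by simp), hβ y (by simp)⟩
  choose! H hH using hwit
  obtain ⟨g, hg⟩ := exists_forall_not_evDom_of_mk_lt_dW (F := H '' S)
    (Cardinal.mk_image_le.trans_lt hS)
  choose h hgh hIco using exists_lt_Ico_infinite g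
  obtain ⟨e, he⟩ := exists_equiv_range_prod_nat (blockIndex h) fun α =>
    ⟨countable_setOf_blockIndex_eq h α,
      (hIco α).mono fun β hβ => blockIndex_eq_of_mem_Ico h hβ⟩
  refine ⟨_, e, fun b hb => ?_⟩
  obtain ⟨δ, hδ⟩ := exists_lt_of_not_evDom (hg _ (mem_image_of_mem H hb))
  obtain ⟨x, hx, y, hy, hδx, hδy, hxH, hyH⟩ := hH b hb δ
  have hblock : ∀ z, δ < z → z < H b δ → ((e z).1 : Set W) = blockIndex h δ := fun z hδz hz =>
    (he z).trans (blockIndex_eq_of_mem_Ico h ⟨hδz.le, hz.trans (hδ.trans (hgh δ))⟩)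
  exact ⟨x, hx, y, hy, Subtype.ext ((hblock x hδx hxH).trans (hblock y hδy hyH).symm)⟩

theorem exists_maxIrredIn_mk_le (Bs : Set (Set W)) (hsub : IsSubalg Bs) (hA : finCofin ⊆ Bs)
    (hdich : Dichot Bs) (hsize : #Bs < dW) :
    ∃ E, MaxIrredIn Bs E ∧ #E ≤ Cardinal.aleph 1 := by
  have hbig : ∀ b ∈ {b ∈ Bs | b ∉ finCofin}, ¬ b.Countable ∧ ¬ bᶜ.Countable := by
    rintro b ⟨hb, hfc⟩
    exact ⟨fun hc => hdich b hb ⟨hc, fun hf => hfc (Or.inl hf)⟩,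
      fun hc => hdich bᶜ (hsub.2.1 b hb) ⟨hc, fun hf => hfc (Or.inr hf)⟩⟩
  obtain ⟨Q, e, he⟩ := exists_equiv_prod_nat_splitting
    ((Cardinal.mk_le_mk_of_subset (sep_subset _ _)).trans_lt hsize) hbig
  refine ⟨fiberSegments e, ⟨?_, irred_fiberSegments e, fun b hb hbE => ?_⟩, ?_⟩
  · rintro _ ⟨⟨q, n⟩, rfl⟩
    exact hA (Or.inl (fiberSegment_finite e q n))
  · by_cases hfc : b ∈ finCofin
    · exact not_irred_insert_of_inGen hbE (inGen_fiberSegments_of_finite_or_cofinite e hfc)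
    · obtain ⟨x, hx, y, hy, hxy⟩ := he b ⟨hb, hfc⟩
      exact not_irred_insert_of_split e hbE hx hy hxy
  · exact Cardinal.mk_range_le.trans_eq ((Cardinal.mk_congr e).symm.trans mk_W)

theorem irrMM_eq_aleph1_of_small (Bs : Set (Set W)) (hsub : IsSubalg Bs)
    (hA : finCofin ⊆ Bs) (hdich : Dichot Bs) (hsize : #Bs < dW) :
    irrMMIn Bs = Cardinal.aleph 1 := by
  obtain ⟨E, hE, hEle⟩ := exists_maxIrredIn_mk_le Bs hsub hA hdich hsize
  refine le_antisymm (csInf_le' ⟨E, hE, hEle.antisymm (aleph_one_le_mk_of_maxIrredIn hA hE)⟩) ?_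
  exact le_csInf ⟨_, E, hE, rfl⟩ fun _ ⟨E', hE', hc⟩ => hc ▸ aleph_one_le_mk_of_maxIrredIn hA hE'
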